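/- arXiv:1906.07225 — 5 statements merged into one kernel-verified Lean document; each statement's English description precedes it below -/
import Mathlib

section
/- If W and W̃ are symmetric n×n real matrices with (I+W)/2 ⪰ W̃ ⪰ W and Null(W̃−W) = span{1} and 1 ∈ Null(I−W̃), then for a sequence generated by x^{k+1} = W̃x^k + y^k − α∇f(x^k), y^{k+1} = y^k − (W̃−W)x^{k+1} with initialization y^0 = −(W̃−W)x^0, the x-iterates coincide with those of EXTRA: x^1 = Wx^0 − α∇f(x^0) and x^{k+2} = (I+W)x^{k+1} − W̃x^k − α[∇f(x^{k+1}) − ∇f(x^k)] for all k ≥ 0. -/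
open Matrix

theorem extra_reformulation_equiv {n p : ℕ}
    (W Wt : Matrix (Fin n) (Fin n) ℝ)
    (hWs : W.IsSymm) (hWts : Wt.IsSymm)
    (hIW : (((1:ℝ)/2) • ((1 : Matrix (Fin n) (Fin n) ℝ) + W) - Wt).PosSemidef)
    (hWtW : (Wt - W).PosSemidef)
    (hnull : ∀ v : Fin n → ℝ, (Wt - W) *ᵥ v = 0 ↔ ∃ c : ℝ, v = fun _ => c)
    (hone : ((1 : Matrix (Fin n) (Fin n) ℝ) - Wt) *ᵥ (fun _ => (1:ℝ)) = 0)
    (α : ℝ) (hα : 0 < α)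
    (gradf : Matrix (Fin n) (Fin p) ℝ → Matrix (Fin n) (Fin p) ℝ)
    (x y : ℕ → Matrix (Fin n) (Fin p) ℝ)
    (hy0 : y 0 = -((Wt - W) * x 0))
    (hx : ∀ k, x (k+1) = Wt * x k + y k - α • gradf (x k))
    (hy : ∀ k, y (k+1) = y k - (Wt - W) * x (k+1)) :
    x 1 = W * x 0 - α • gradf (x 0) ∧
    ∀ k, x (k+2) = ((1 : Matrix (Fin n) (Fin n) ℝ) + W) * x (k+1) - Wt * x k
      - α • (gradf (x (k+1)) - gradf (x k)) := by
  constructor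
  · rw [hx 0, hy0]
    simp [Matrix.sub_mul]
  · intro k
    have h1 := hx (k+1)
    have h2 := hx k
    have h3 := hy k
    have hyk : y k = x (k+1) - Wt * x k + α • gradf (x k) := by
      rw [h2]; abel
    rw [h1, h3, hyk]
    simp [Matrix.sub_mul, Matrix.add_mul, smul_sub]
    abel
end

section
/- Let W be symmetric with W1=1 and spectrum in (−5/3, 1]. Suppose x⁺ − x* ∈ Range(I−W) satisfies (I−W)(x⁺ − x*) = α(2I − (I−W))(d⁺ − d) with d⁺ − d ∈ Range(I−W). Then ‖x⁺ − x*‖²_{I−W} = α² ‖d⁺ − d‖²_{4(I−W)† − 4I + (I−W)}, and consequently ‖x⁺ − x*‖²_{I−W} ≤ α² r₅ ‖d⁺ − d‖²_{M̃ + (θ − 3/4 − r₄)I}, where r₅ = max(2, (λ_max(I−W) − 2)² / (2 − (3/4 + r₄)λ_max(I−W))) and M̃ = ((I−W)/2)† − θI, provided θ ∈ (3/4, 1], 0 < r₄ < θ − 3/4, and 2 − (3/4 + r₄)λ_max(I−W) > 0. -/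
open Matrix

lemma trace_nonneg_aux {n p : ℕ} {M : Matrix (Fin n) (Fin n) ℝ} (hM : M.PosSemidef)
    (X : Matrix (Fin n) (Fin p) ℝ) : 0 ≤ (Xᵀ * (M * X)).trace := by
  apply Finset.sum_nonneg
  intro j _
  have h := hM.dotProduct_mulVec_nonneg (fun i => X i j)
  simpa [Matrix.mul_apply, Matrix.mulVec, dotProduct, Matrix.diag] using h

lemma pinv_symm {n : ℕ} {A P : Matrix (Fin n) (Fin n) ℝ} (hAt : Aᵀ = A)
    (h1 : A * P * A = A) (h2 : P * A * P = P) (h3 : (A * P)ᵀ = A * P)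
    (h4 : (P * A)ᵀ = P * A) : Pᵀ = P ∧ A * P = P * A := by
  have e1 : A * Pᵀ = P * A := by
    have t : (P * A)ᵀ = Aᵀ * Pᵀ := transpose_mul P A
    rw [h4, hAt] at t; exact t.symm
  have e2 : Pᵀ * A = A * P := by
    have t : (A * P)ᵀ = Pᵀ * Aᵀ := transpose_mul A P
    rw [h3, hAt] at t; exact t.symm
  have hQ1 : A * Pᵀ * A = A := by
    have t := congrArg Matrix.transpose h1
    rw [transpose_mul, transpose_mul, hAt] at t
    rw [Matrix.mul_assoc]; exact t
  have t1 : A * Pᵀ * (A * P) = A * P := by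
    rw [← Matrix.mul_assoc, hQ1]
  have t2 : A * Pᵀ * (A * P) = P * A := by
    rw [e1, ← e2, Matrix.mul_assoc, ← Matrix.mul_assoc A Pᵀ A, hQ1]
  have hcomm : A * P = P * A := t1.symm.trans t2
  have hQ2' : Pᵀ * (A * Pᵀ) = Pᵀ := by
    have t := congrArg Matrix.transpose h2
    rw [transpose_mul, transpose_mul, hAt] at t
    exact t
  have e2' : Pᵀ * A = P * A := e2.trans hcomm
  have hPt : P = Pᵀ := by
    calc P = P * A * P := h2.symm
      _ = Pᵀ * A * P := by rw [← e2']
      _ = Pᵀ * (A * P) := Matrix.mul_assoc _ _ _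
      _ = Pᵀ * (A * Pᵀ) := by rw [hcomm, ← e1]
      _ = Pᵀ := hQ2'
  exact ⟨hPt.symm, hcomm⟩

/-- The four Moore–Penrose conditions: `P` is the pseudoinverse of `A`. -/
def IsMoorePenrose {n : ℕ} (A P : Matrix (Fin n) (Fin n) ℝ) : Prop :=
  A * P * A = A ∧ P * A * P = P ∧ (A * P)ᵀ = A * P ∧ (P * A)ᵀ = P * A

set_option maxHeartbeats 1000000 in
theorem nids_dx_bound {n p : ℕ}
    (W : Matrix (Fin n) (Fin n) ℝ) (hWs : W.IsSymm)
    (hone : W *ᵥ (fun _ => (1:ℝ)) = fun _ => (1:ℝ))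
    (hIW : ((1 : Matrix (Fin n) (Fin n) ℝ) - W).PosSemidef)
    (hlow : (W + ((5:ℝ)/3) • (1 : Matrix (Fin n) (Fin n) ℝ)).PosDef)
    (P : Matrix (Fin n) (Fin n) ℝ)
    (hP : IsMoorePenrose ((1 : Matrix (Fin n) (Fin n) ℝ) - W) P)
    (α : ℝ) (hα : 0 < α)
    (xp xs d dp : Matrix (Fin n) (Fin p) ℝ)
    (hxrange : ∃ C, xp - xs = ((1 : Matrix (Fin n) (Fin n) ℝ) - W) * C)
    (hdrange : ∃ C, dp - d = ((1 : Matrix (Fin n) (Fin n) ℝ) - W) * C)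
    (hrel : ((1 : Matrix (Fin n) (Fin n) ℝ) - W) * (xp - xs)
      = α • ((((2:ℝ) • (1 : Matrix (Fin n) (Fin n) ℝ)
          - ((1 : Matrix (Fin n) (Fin n) ℝ) - W))) * (dp - d)))
    (lmax : ℝ)
    (hlmax : ∀ v : Fin n → ℝ,
      v ⬝ᵥ (((1 : Matrix (Fin n) (Fin n) ℝ) - W) *ᵥ v) ≤ lmax * (v ⬝ᵥ v))
    (hlmax' : ∃ v : Fin n → ℝ, v ≠ 0 ∧
      v ⬝ᵥ (((1 : Matrix (Fin n) (Fin n) ℝ) - W) *ᵥ v) = lmax * (v ⬝ᵥ v))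
    (θ r4 : ℝ) (hθ1 : 3 / 4 < θ) (hθ2 : θ ≤ 1)
    (hr4 : 0 < r4) (hr4' : r4 < θ - 3 / 4)
    (hden : 0 < 2 - (3 / 4 + r4) * lmax) :
    ((xp - xs)ᵀ * (((1 : Matrix (Fin n) (Fin n) ℝ) - W) * (xp - xs))).trace
      = α ^ 2 * ((dp - d)ᵀ * (((4:ℝ) • P - (4:ℝ) • (1 : Matrix (Fin n) (Fin n) ℝ)
          + ((1 : Matrix (Fin n) (Fin n) ℝ) - W)) * (dp - d))).trace ∧
    ((xp - xs)ᵀ * (((1 : Matrix (Fin n) (Fin n) ℝ) - W) * (xp - xs))).trace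
      ≤ α ^ 2 * max 2 ((lmax - 2) ^ 2 / (2 - (3 / 4 + r4) * lmax))
        * ((dp - d)ᵀ * ((((2:ℝ) • P - θ • (1 : Matrix (Fin n) (Fin n) ℝ))
            + (θ - 3 / 4 - r4) • (1 : Matrix (Fin n) (Fin n) ℝ)) * (dp - d))).trace := by
  obtain ⟨hAPA, hPAP, hAPt, hPAt⟩ := hP
  set A : Matrix (Fin n) (Fin n) ℝ := (1 : Matrix (Fin n) (Fin n) ℝ) - W with hAdef
  set z : Matrix (Fin n) (Fin p) ℝ := xp - xs with hzdef
  set y : Matrix (Fin n) (Fin p) ℝ := dp - d with hydef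
  have hAt : Aᵀ = A := by rw [hAdef, transpose_sub, transpose_one, hWs.eq]
  obtain ⟨hPt, hcomm⟩ := pinv_symm hAt hAPA hPAP hAPt hPAt
  obtain ⟨C, hC⟩ : ∃ C : Matrix (Fin n) (Fin p) ℝ, z = A * C := hxrange
  obtain ⟨D, hD⟩ : ∃ D : Matrix (Fin n) (Fin p) ℝ, y = A * D := hdrange
  have hPAA : P * A * A = A := by rw [← hcomm]; exact hAPA
  have f1 : ∀ M : Matrix (Fin n) (Fin p) ℝ, P * (A * (A * M)) = A * M := by
    intro M; rw [← Matrix.mul_assoc, ← Matrix.mul_assoc, hPAA]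
  have f2 : ∀ M : Matrix (Fin n) (Fin p) ℝ, A * (P * (A * M)) = A * M := by
    intro M; rw [← Matrix.mul_assoc, ← Matrix.mul_assoc, hAPA]
  have hPyy : P * (A * y) = y := by rw [hD]; exact f1 D
  have hAPy : A * (P * y) = y := by rw [hD]; exact f2 D
  have hz : z = α • (P * (((2:ℝ) • (1 : Matrix (Fin n) (Fin n) ℝ) - A) * y)) := by
    have h0 : z = P * (A * z) := by rw [hC]; exact (f1 C).symm
    rw [h0, hrel, Matrix.mul_smul]
  have hQ2t : (((2:ℝ) • (1 : Matrix (Fin n) (Fin n) ℝ) - A))ᵀ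
      = (2:ℝ) • (1 : Matrix (Fin n) (Fin n) ℝ) - A := by
    rw [transpose_sub, transpose_smul, transpose_one, hAt]
  have hmid : ((2:ℝ) • (1 : Matrix (Fin n) (Fin n) ℝ) - A) *
        (P * (((2:ℝ) • (1 : Matrix (Fin n) (Fin n) ℝ) - A) * y))
      = ((4:ℝ) • P - (4:ℝ) • (1 : Matrix (Fin n) (Fin n) ℝ) + A) * y := by
    have hPs : P * (((2:ℝ) • (1 : Matrix (Fin n) (Fin n) ℝ) - A) * y)
        = (2:ℝ) • (P * y) - y := by
      rw [Matrix.sub_mul, Matrix.smul_mul, Matrix.one_mul, Matrix.mul_sub, Matrix.mul_smul, hPyy]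
    rw [hPs]
    simp only [Matrix.sub_mul, Matrix.add_mul, Matrix.smul_mul, Matrix.mul_sub,
      Matrix.mul_smul, Matrix.one_mul, smul_sub, smul_smul, hAPy]
    module
  have heq1 : zᵀ * (A * z)
      = (α ^ 2) • (yᵀ * (((4:ℝ) • P - (4:ℝ) • (1 : Matrix (Fin n) (Fin n) ℝ) + A) * y)) := by
    rw [hrel, hz]
    rw [transpose_smul, Matrix.smul_mul, Matrix.mul_smul, smul_smul, ← pow_two]
    congr 1
    rw [transpose_mul, transpose_mul, hPt, hQ2t, Matrix.mul_assoc, Matrix.mul_assoc,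
      ← Matrix.mul_assoc P, ← hmid]
    rw [Matrix.mul_assoc]
  have goal1 : (zᵀ * (A * z)).trace
      = α ^ 2 * (yᵀ * (((4:ℝ) • P - (4:ℝ) • (1 : Matrix (Fin n) (Fin n) ℝ) + A) * y)).trace := by
    rw [heq1, trace_smul, smul_eq_mul]
  refine ⟨goal1, ?_⟩
  -- Part 2
  set r5 : ℝ := max 2 ((lmax - 2) ^ 2 / (2 - (3 / 4 + r4) * lmax)) with hr5def
  set B : Matrix (Fin n) (Fin n) ℝ := lmax • (1 : Matrix (Fin n) (Fin n) ℝ) - A with hBdef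
  have hBt : Bᵀ = B := by rw [hBdef, transpose_sub, transpose_smul, transpose_one, hAt]
  have hstar : ∀ x : Fin n → ℝ, star x = x := fun x => funext fun i => star_trivial _
  have hBps : B.PosSemidef := by
    refine Matrix.posSemidef_iff_dotProduct_mulVec.mpr ⟨?_, ?_⟩
    · rw [Matrix.IsHermitian, conjTranspose_eq_transpose_of_trivial, hBt]
    · intro x
      rw [hstar x]
      rw [hBdef, Matrix.sub_mulVec, Matrix.smul_mulVec, Matrix.one_mulVec,
        dotProduct_sub, dotProduct_smul, smul_eq_mul]
      have := hlmax x
      linarith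
  have hS1 : 0 ≤ (Dᵀ * (B * (A * (B * D)))).trace := by
    have t := trace_nonneg_aux hIW (B * D)
    rwa [transpose_mul, hBt, Matrix.mul_assoc] at t
  have hS2 : 0 ≤ (Dᵀ * (A * (B * (A * D)))).trace := by
    have t := trace_nonneg_aux hBps (A * D)
    rwa [transpose_mul, hAt, Matrix.mul_assoc] at t
  have hT2nn : 0 ≤ (Dᵀ * (A * (A * D))).trace := by
    have t := trace_nonneg_aux (Matrix.PosDef.one.posSemidef) (A * D)
    rwa [Matrix.one_mul, transpose_mul, hAt, Matrix.mul_assoc] at t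
  have hS1eq : (Dᵀ * (B * (A * (B * D)))).trace
      = lmax ^ 2 * (Dᵀ * (A * D)).trace - 2 * lmax * (Dᵀ * (A * (A * D))).trace
        + (Dᵀ * (A * (A * (A * D)))).trace := by
    rw [hBdef]
    simp only [Matrix.sub_mul, Matrix.mul_sub, Matrix.smul_mul, Matrix.mul_smul,
      Matrix.one_mul, smul_smul, trace_sub, trace_smul, smul_eq_mul]
    ring
  have hS2eq : (Dᵀ * (A * (B * (A * D)))).trace
      = lmax * (Dᵀ * (A * (A * D))).trace - (Dᵀ * (A * (A * (A * D)))).trace := by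
    rw [hBdef]
    simp only [Matrix.sub_mul, Matrix.mul_sub, Matrix.smul_mul, Matrix.mul_smul,
      Matrix.one_mul, smul_smul, trace_sub, trace_smul, smul_eq_mul]
  have hyT : yᵀ = Dᵀ * A := by rw [hD, transpose_mul, hAt]
  have g1 : yᵀ * (P * y) = Dᵀ * (A * D) := by
    rw [hyT, Matrix.mul_assoc, hAPy, hD]
  have g2 : yᵀ * y = Dᵀ * (A * (A * D)) := by
    rw [hyT, Matrix.mul_assoc, hD]
  have g3 : yᵀ * (A * y) = Dᵀ * (A * (A * (A * D))) := by
    rw [hyT, Matrix.mul_assoc, hD]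
  have hE : (yᵀ * (((4:ℝ) • P - (4:ℝ) • (1 : Matrix (Fin n) (Fin n) ℝ) + A) * y)).trace
      = 4 * (Dᵀ * (A * D)).trace - 4 * (Dᵀ * (A * (A * D))).trace
        + (Dᵀ * (A * (A * (A * D)))).trace := by
    simp only [Matrix.add_mul, Matrix.sub_mul, Matrix.smul_mul, Matrix.one_mul,
      Matrix.mul_add, Matrix.mul_sub, Matrix.mul_smul, trace_add, trace_sub, trace_smul,
      smul_eq_mul, g1, g2, g3]
  have hR : (yᵀ * ((((2:ℝ) • P - θ • (1 : Matrix (Fin n) (Fin n) ℝ))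
        + (θ - 3 / 4 - r4) • (1 : Matrix (Fin n) (Fin n) ℝ)) * y)).trace
      = 2 * (Dᵀ * (A * D)).trace - (3 / 4 + r4) * (Dᵀ * (A * (A * D))).trace := by
    simp only [Matrix.add_mul, Matrix.sub_mul, Matrix.smul_mul, Matrix.one_mul,
      Matrix.mul_add, Matrix.mul_sub, Matrix.mul_smul, trace_add, trace_sub, trace_smul,
      smul_eq_mul, g1, g2]
    ring
  -- scalar bounds on r5
  have hr5a : (2:ℝ) ≤ r5 := le_max_left _ _
  have hr5b : (lmax - 2) ^ 2 / (2 - (3 / 4 + r4) * lmax) ≤ r5 := le_max_right _ _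
  have hgl : 0 ≤ r5 * (2 - (3 / 4 + r4) * lmax) - (lmax - 2) ^ 2 := by
    have := (div_le_iff₀ hden).mp hr5b
    linarith
  have hg0 : 0 ≤ 2 * r5 - 4 := by linarith
  -- lmax ≥ 0
  obtain ⟨v, hv0, hveq⟩ := hlmax'
  have hvv : 0 < v ⬝ᵥ v := by
    have h1 : 0 ≤ v ⬝ᵥ v := Finset.sum_nonneg fun i _ => mul_self_nonneg _
    have h2 : v ⬝ᵥ v ≠ 0 := fun h => hv0 (dotProduct_self_eq_zero.mp h)
    exact lt_of_le_of_ne h1 (Ne.symm h2)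
  have hA0' : 0 ≤ v ⬝ᵥ A *ᵥ v := by
    have := hIW.dotProduct_mulVec_nonneg v
    rwa [hstar v] at this
  have hlmax0 : 0 ≤ lmax := by
    have hm : 0 ≤ lmax * (v ⬝ᵥ v) := hveq ▸ hA0'
    exact (mul_nonneg_iff_of_pos_right hvv).mp hm
  rcases eq_or_lt_of_le hlmax0 with hl0 | hlpos
  · -- lmax = 0 : A = 0
    have hAz : ∀ x : Fin n → ℝ, A *ᵥ x = 0 := by
      intro x
      apply (hIW.dotProduct_mulVec_zero_iff x).mp
      rw [hstar x]
      have h1 := hlmax x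
      have h2 : 0 ≤ x ⬝ᵥ A *ᵥ x := by
        have := hIW.dotProduct_mulVec_nonneg x
        rwa [hstar x] at this
      rw [← hl0] at h1
      linarith
    have hA0m : A = 0 := by
      ext i j
      have := congrFun (hAz (Pi.single j 1)) i
      simpa using this
    have hy0 : y = 0 := by rw [hD, hA0m, Matrix.zero_mul]
    have hz0 : z = 0 := by rw [hC, hA0m, Matrix.zero_mul]
    rw [hz0, hy0]
    simp
  · -- lmax > 0
    have hL2 : 0 < lmax ^ 2 := by positivity
    have expand : lmax ^ 2 * (r5 * (2 * (Dᵀ * (A * D)).trace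
          - (3 / 4 + r4) * (Dᵀ * (A * (A * D))).trace)
        - (4 * (Dᵀ * (A * D)).trace - 4 * (Dᵀ * (A * (A * D))).trace
          + (Dᵀ * (A * (A * (A * D)))).trace))
        = (2 * r5 - 4) * (Dᵀ * (B * (A * (B * D)))).trace
          + (2 * r5 - 4) * (Dᵀ * (A * (B * (A * D)))).trace
          + (lmax * (r5 * (2 - (3 / 4 + r4) * lmax) - (lmax - 2) ^ 2))
            * (Dᵀ * (A * (A * D))).trace
          + lmax ^ 2 * (Dᵀ * (A * (B * (A * D)))).trace := by
      rw [hS1eq, hS2eq]; ring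
    have pos : 0 ≤ (2 * r5 - 4) * (Dᵀ * (B * (A * (B * D)))).trace
          + (2 * r5 - 4) * (Dᵀ * (A * (B * (A * D)))).trace
          + (lmax * (r5 * (2 - (3 / 4 + r4) * lmax) - (lmax - 2) ^ 2))
            * (Dᵀ * (A * (A * D))).trace
          + lmax ^ 2 * (Dᵀ * (A * (B * (A * D)))).trace := by
      have p1 := mul_nonneg hg0 hS1
      have p2 := mul_nonneg hg0 hS2
      have p3 := mul_nonneg (mul_nonneg hlmax0 hgl) hT2nn
      have p4 := mul_nonneg (le_of_lt hL2) hS2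
      linarith
    have key := expand ▸ pos
    have core : 4 * (Dᵀ * (A * D)).trace - 4 * (Dᵀ * (A * (A * D))).trace
          + (Dᵀ * (A * (A * (A * D)))).trace
        ≤ r5 * (2 * (Dᵀ * (A * D)).trace - (3 / 4 + r4) * (Dᵀ * (A * (A * D))).trace) := by
      have h' : lmax ^ 2 * 0 ≤ lmax ^ 2 * (r5 * (2 * (Dᵀ * (A * D)).trace
          - (3 / 4 + r4) * (Dᵀ * (A * (A * D))).trace)
        - (4 * (Dᵀ * (A * D)).trace - 4 * (Dᵀ * (A * (A * D))).trace
          + (Dᵀ * (A * (A * (A * D)))).trace)) := by rw [mul_zero]; exact key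
      have h2 := le_of_mul_le_mul_left h' hL2
      linarith
    rw [goal1, hE, hR]
    have final := mul_le_mul_of_nonneg_left core (sq_nonneg α)
    calc α ^ 2 * (4 * (Dᵀ * (A * D)).trace - 4 * (Dᵀ * (A * (A * D))).trace
          + (Dᵀ * (A * (A * (A * D)))).trace)
        ≤ α ^ 2 * (r5 * (2 * (Dᵀ * (A * D)).trace
            - (3 / 4 + r4) * (Dᵀ * (A * (A * D))).trace)) := final
      _ = α ^ 2 * r5 * (2 * (Dᵀ * (A * D)).trace
            - (3 / 4 + r4) * (Dᵀ * (A * (A * D))).trace) := by ring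
end

section
/- Let G = W + I − 2W̃ ⪰ 0 and suppose I − W = G + 2(W̃ − W) with W̃ − W ⪰ 0. If (W̃−W)x⁺ = y − y⁺ and (W̃−W)x* = 0, then ‖x⁺ − x*‖²_G = ‖x⁺ − x*‖²_{I−W} − 2‖y − y⁺‖²_{(W̃−W)†}. -/
open Matrix

theorem G_norm_decomposition {n p : ℕ}
    (W Wt : Matrix (Fin n) (Fin n) ℝ) (hWs : W.IsSymm) (hWts : Wt.IsSymm)
    (hIW : (((1:ℝ)/2) • ((1 : Matrix (Fin n) (Fin n) ℝ) + W) - Wt).PosSemidef)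
    (hWtW : (Wt - W).PosSemidef)
    (hG : (W + (1 : Matrix (Fin n) (Fin n) ℝ) - (2:ℝ) • Wt).PosSemidef)
    (M : Matrix (Fin n) (Fin n) ℝ) (hM : IsMoorePenrose (Wt - W) M)
    (xp xs y yp : Matrix (Fin n) (Fin p) ℝ)
    (hrange : ∃ C, y - yp = (Wt - W) * C)
    (hxp : (Wt - W) * xp = y - yp)
    (hxs : (Wt - W) * xs = 0) :
    ((xp - xs)ᵀ * ((W + (1 : Matrix (Fin n) (Fin n) ℝ) - (2:ℝ) • Wt) * (xp - xs))).trace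
      = ((xp - xs)ᵀ * (((1 : Matrix (Fin n) (Fin n) ℝ) - W) * (xp - xs))).trace
        - 2 * ((y - yp)ᵀ * (M * (y - yp))).trace := by
  obtain ⟨h1, h2, h3, h4⟩ := hM
  set A := Wt - W with hAdef
  have hAs : Aᵀ = A := (hWts.sub hWs)
  have hAx : A * (xp - xs) = y - yp := by
    rw [Matrix.mul_sub, hxp, hxs, sub_zero]
  have key : (y - yp)ᵀ * (M * (y - yp)) = (xp - xs)ᵀ * (A * (xp - xs)) := by
    rw [← hAx, transpose_mul, hAs]
    calc (xp - xs)ᵀ * A * (M * (A * (xp - xs)))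
        = (xp - xs)ᵀ * (A * M * A * (xp - xs)) := by
          simp only [Matrix.mul_assoc]
      _ = (xp - xs)ᵀ * (A * (xp - xs)) := by rw [h1]
  have hGdef : (W + (1 : Matrix (Fin n) (Fin n) ℝ) - (2:ℝ) • Wt)
      = ((1 : Matrix (Fin n) (Fin n) ℝ) - W) - (2:ℝ) • A := by
    rw [hAdef]; module
  rw [hGdef, Matrix.sub_mul, Matrix.smul_mul, Matrix.mul_sub, Matrix.mul_smul,
    trace_sub, trace_smul, key]
  simp [smul_eq_mul]
end

section
/- Let W̄ be symmetric positive definite and f satisfy the cocoercivity inequality ⟨x − x̃, ∇f(x) − ∇f(x̃)⟩ ≥ L^{-1}‖∇f(x) − ∇f(x̃)‖². Then for any α > 0 and any x, x⁺, x* ∈ ℝ^{n×p}, −‖x − x⁺‖²_{W̄} − 2α⟨x⁺ − x*, ∇f(x) − ∇f(x*)⟩ ≤ −(2α − α²L/λ_min(W̄))⟨x − x*, ∇f(x) − ∇f(x*)⟩ − ‖W̄(x − x⁺) − α(∇f(x) − ∇f(x*))‖²_{W̄^{-1}}. -/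
open Matrix

private lemma trace_col_sum {n p : ℕ} (M : Matrix (Fin n) (Fin n) ℝ)
    (A : Matrix (Fin n) (Fin p) ℝ) :
    (Aᵀ * (M * A)).trace = ∑ j, (fun i => A i j) ⬝ᵥ (M *ᵥ fun i => A i j) := by
  simp only [Matrix.trace, Matrix.diag, Matrix.mul_apply, Matrix.transpose_apply,
    dotProduct, Matrix.mulVec, Finset.mul_sum]

private lemma trace_self_sum {n p : ℕ} (A : Matrix (Fin n) (Fin p) ℝ) :
    (Aᵀ * A).trace = ∑ j, (fun i => A i j) ⬝ᵥ (fun i => A i j) := by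
  simp only [Matrix.trace, Matrix.diag, Matrix.mul_apply, Matrix.transpose_apply, dotProduct]

private lemma quad_expand {n p : ℕ} (W : Matrix (Fin n) (Fin n) ℝ)
    (hsym : Wᵀ = W) (hinv : W * W⁻¹ = 1) (hinv' : W⁻¹ * W = 1)
    (α : ℝ) (D g : Matrix (Fin n) (Fin p) ℝ) :
    ((W * D - α • g)ᵀ * (W⁻¹ * (W * D - α • g))).trace
      = (Dᵀ * (W * D)).trace - 2 * α * (Dᵀ * g).trace
        + α ^ 2 * (gᵀ * (W⁻¹ * g)).trace := by
  have htr_gD : (gᵀ * D).trace = (Dᵀ * g).trace := by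
    rw [← Matrix.trace_transpose (gᵀ * D), Matrix.transpose_mul, Matrix.transpose_transpose]
  have e0 : W⁻¹ * (W * D - α • g) = D - α • (W⁻¹ * g) := by
    rw [Matrix.mul_sub, ← Matrix.mul_assoc, hinv', Matrix.one_mul, Matrix.mul_smul]
  have e1 : Dᵀ * W * (W⁻¹ * g) = Dᵀ * g := by
    rw [Matrix.mul_assoc, ← Matrix.mul_assoc W, hinv, Matrix.one_mul]
  have expand : (W * D - α • g)ᵀ * (W⁻¹ * (W * D - α • g))
      = Dᵀ * (W * D) - α • (Dᵀ * g) - α • (gᵀ * D) + (α * α) • (gᵀ * (W⁻¹ * g)) := by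
    rw [e0, Matrix.transpose_sub, Matrix.transpose_smul, Matrix.transpose_mul, hsym,
      Matrix.sub_mul, Matrix.mul_sub, Matrix.mul_sub, Matrix.smul_mul, Matrix.mul_smul,
      Matrix.mul_smul, Matrix.smul_mul, e1, ← Matrix.mul_assoc, smul_smul,
      Matrix.mul_assoc Dᵀ W D]
    abel
  rw [expand, Matrix.trace_add, Matrix.trace_sub, Matrix.trace_sub,
    Matrix.trace_smul, Matrix.trace_smul, Matrix.trace_smul, htr_gD]
  simp only [smul_eq_mul]
  ring

theorem extra_descent_bound {n p : ℕ} (L : ℝ) (hL : 0 < L)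
    (Wb : Matrix (Fin n) (Fin n) ℝ) (hWb : Wb.PosDef)
    (lmin : ℝ) (hlminpos : 0 < lmin)
    (hlmin : ∀ v : Fin n → ℝ, lmin * (v ⬝ᵥ v) ≤ v ⬝ᵥ (Wb *ᵥ v))
    (hlmin' : ∃ v : Fin n → ℝ, v ≠ 0 ∧ lmin * (v ⬝ᵥ v) = v ⬝ᵥ (Wb *ᵥ v))
    (gradf : Matrix (Fin n) (Fin p) ℝ → Matrix (Fin n) (Fin p) ℝ)
    (hcoco : ∀ x xt : Matrix (Fin n) (Fin p) ℝ,
      L⁻¹ * ((gradf x - gradf xt)ᵀ * (gradf x - gradf xt)).trace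
        ≤ ((x - xt)ᵀ * (gradf x - gradf xt)).trace)
    (α : ℝ) (hα : 0 < α)
    (x xp xs : Matrix (Fin n) (Fin p) ℝ) :
    -((x - xp)ᵀ * (Wb * (x - xp))).trace
        - 2 * α * ((xp - xs)ᵀ * (gradf x - gradf xs)).trace
      ≤ -(2 * α - α ^ 2 * L / lmin) * ((x - xs)ᵀ * (gradf x - gradf xs)).trace
        - ((Wb * (x - xp) - α • (gradf x - gradf xs))ᵀ
            * (Wb⁻¹ * (Wb * (x - xp) - α • (gradf x - gradf xs)))).trace := by
  set g := gradf x - gradf xs with hg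
  set D := x - xp with hD
  set y := x - xs with hy
  have hWsym : Wbᵀ = Wb := by simpa using hWb.isHermitian.eq
  have hdet : IsUnit Wb.det := hWb.det_pos.ne'.isUnit
  have hWinv : Wb⁻¹ * Wb = 1 := Matrix.nonsing_inv_mul Wb hdet
  have hWinv' : Wb * Wb⁻¹ = 1 := Matrix.mul_nonsing_inv Wb hdet
  have hQ : ((Wb * D - α • g)ᵀ * (Wb⁻¹ * (Wb * D - α • g))).trace
      = (Dᵀ * (Wb * D)).trace - 2 * α * (Dᵀ * g).trace
        + α ^ 2 * (gᵀ * (Wb⁻¹ * g)).trace :=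
    quad_expand Wb hWsym hWinv' hWinv α D g
  -- linearity: xp - xs = y - D
  have hsplit : ((xp - xs)ᵀ * g).trace = (yᵀ * g).trace - (Dᵀ * g).trace := by
    have : xp - xs = y - D := by rw [hy, hD]; abel
    rw [this, Matrix.transpose_sub, Matrix.sub_mul, Matrix.trace_sub]
  -- per-column eigenvalue bound for Wb⁻¹
  have hcolbound : ∀ v : Fin n → ℝ, lmin * (v ⬝ᵥ (Wb⁻¹ *ᵥ v)) ≤ v ⬝ᵥ v := by
    intro v
    set u := Wb⁻¹ *ᵥ v with hu
    have hWu : Wb *ᵥ u = v := by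
      rw [hu, Matrix.mulVec_mulVec, hWinv', Matrix.one_mulVec]
    have h1 : lmin * (u ⬝ᵥ u) ≤ u ⬝ᵥ v := by
      have := hlmin u; rwa [hWu] at this
    have hvu : v ⬝ᵥ u = u ⬝ᵥ v := dotProduct_comm v u
    rw [hvu]
    have ha : 0 ≤ u ⬝ᵥ u := Finset.sum_nonneg fun i _ => mul_self_nonneg _
    have hb : 0 ≤ v ⬝ᵥ v := Finset.sum_nonneg fun i _ => mul_self_nonneg _
    have hs : 0 ≤ u ⬝ᵥ v := le_trans (mul_nonneg hlminpos.le ha) h1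
    have hCS : (u ⬝ᵥ v) ^ 2 ≤ (u ⬝ᵥ u) * (v ⬝ᵥ v) := by
      have := Finset.sum_mul_sq_le_sq_mul_sq Finset.univ u v
      simpa [dotProduct, sq, Finset.mul_sum, mul_comm, mul_left_comm] using this
    rcases eq_or_lt_of_le hs with h | h
    · rw [← h, mul_zero]; exact hb
    · have chain : lmin * (u ⬝ᵥ v) * (u ⬝ᵥ v) ≤ (v ⬝ᵥ v) * (u ⬝ᵥ v) := by
        have c1 : lmin * (u ⬝ᵥ v) ^ 2 ≤ lmin * ((u ⬝ᵥ u) * (v ⬝ᵥ v)) :=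
          mul_le_mul_of_nonneg_left hCS hlminpos.le
        have c2 : lmin * (u ⬝ᵥ u) * (v ⬝ᵥ v) ≤ (u ⬝ᵥ v) * (v ⬝ᵥ v) :=
          mul_le_mul_of_nonneg_right h1 hb
        nlinarith
      exact le_of_mul_le_mul_right chain h
  -- trace versions
  have hcol : lmin * (gᵀ * (Wb⁻¹ * g)).trace ≤ (gᵀ * g).trace := by
    rw [trace_col_sum, trace_self_sum, Finset.mul_sum]
    exact Finset.sum_le_sum fun j _ => hcolbound _
  have hc : L⁻¹ * (gᵀ * g).trace ≤ (yᵀ * g).trace := hcoco x xs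
  have hc' : (gᵀ * g).trace ≤ L * (yᵀ * g).trace := by
    rw [inv_mul_le_iff₀ hL] at hc; exact hc
  have key : α ^ 2 * (gᵀ * (Wb⁻¹ * g)).trace ≤ α ^ 2 * L / lmin * (yᵀ * g).trace := by
    rw [div_mul_eq_mul_div, le_div_iff₀ hlminpos]
    nlinarith [sq_nonneg α, hcol, hc']
  rw [hQ, hsplit]
  linarith
end

section
/- Let W be symmetric with W1 = 1, all other eigenvalues < 1, and let (d*, x*) be a fixed point of the NIDS reformulation with d* ∈ Range(I−W): d* + ∇f(x*) = 0 and (I−W)x* = 0. Then x* is consensual, x* = 1(x*)ᵀ for some x* ∈ ℝ^p, and 1ᵀ∇f(x*) = 0, i.e., Σ_i ∇f_i(x*) = 0, so x* minimizes f̄(x) = (1/n)Σ_i f_i(x) when each f_i is convex. -/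
open Matrix

theorem nids_fixed_point_optimality {n p : ℕ} (hn : 0 < n)
    (W : Matrix (Fin n) (Fin n) ℝ) (hWs : W.IsSymm)
    (hone : W *ᵥ (fun _ => (1:ℝ)) = fun _ => (1:ℝ))
    (hnull : ∀ v : Fin n → ℝ,
      ((1 : Matrix (Fin n) (Fin n) ℝ) - W) *ᵥ v = 0 ↔ ∃ c : ℝ, v = fun _ => c)
    (f : Fin n → (Fin p → ℝ) → ℝ)
    (gradF : Fin n → (Fin p → ℝ) → (Fin p → ℝ))
    -- each fᵢ is convex and differentiable with gradient gradF i: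
    (hconv : ∀ i (x y : Fin p → ℝ),
      f i x + (gradF i x) ⬝ᵥ (y - x) ≤ f i y)
    (dstar xstar : Matrix (Fin n) (Fin p) ℝ)
    (hdrange : ∃ C, dstar = ((1 : Matrix (Fin n) (Fin n) ℝ) - W) * C)
    (hfix1 : ∀ i, dstar i + gradF i (xstar i) = 0)
    (hfix2 : ((1 : Matrix (Fin n) (Fin n) ℝ) - W) * xstar = 0) :
    ∃ z : Fin p → ℝ,
      (∀ i, xstar i = z) ∧
      (∑ i, gradF i z) = 0 ∧
      (∀ w : Fin p → ℝ,
        (1 / (n : ℝ)) * ∑ i, f i z ≤ (1 / (n : ℝ)) * ∑ i, f i w) := by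
  obtain ⟨i0⟩ := Fin.pos_iff_nonempty.mp hn
  -- column sums of I - W are zero
  have hcolsum : ∀ k, ∑ i, ((1 : Matrix (Fin n) (Fin n) ℝ) - W) i k = 0 := by
    intro k
    have h1 : ∑ i, W i k = 1 := by
      have := congrFun hone k
      simp only [mulVec, dotProduct, mul_one] at this
      calc ∑ i, W i k = ∑ i, W k i := by
            refine Finset.sum_congr rfl fun i _ => ?_
            exact (congrFun (congrFun hWs.symm k) i).symm ▸ (Matrix.IsSymm.apply hWs k i).symm
        _ = 1 := this
    simp [Matrix.sub_apply, Matrix.one_apply, Finset.sum_sub_distrib, h1]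
  -- each column of xstar is constant
  have hconst : ∀ j, ∃ c, ∀ i, xstar i j = c := by
    intro j
    have h : ((1 : Matrix (Fin n) (Fin n) ℝ) - W) *ᵥ (fun i => xstar i j) = 0 := by
      funext i
      have := congrFun (congrFun hfix2 i) j
      simpa [Matrix.mul_apply, mulVec, dotProduct] using this
    obtain ⟨c, hc⟩ := (hnull _).mp h
    exact ⟨c, fun i => congrFun hc i⟩
  set z := xstar i0 with hz
  have hxz : ∀ i, xstar i = z := by
    intro i; funext j
    obtain ⟨c, hc⟩ := hconst j
    rw [hc i]; exact (hc i0).symm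
  -- sum of dstar columns is zero
  obtain ⟨C, hC⟩ := hdrange
  have hdsum : ∑ i, dstar i = 0 := by
    funext j
    obtain ⟨C', hC'⟩ : ∃ C' : Matrix (Fin n) (Fin p) ℝ,
        dstar = ((1 : Matrix (Fin n) (Fin n) ℝ) - W) * C' := ⟨C, hC⟩
    rw [Finset.sum_apply (g := fun i => dstar i)]
    simp only [hC', Matrix.mul_apply, Pi.zero_apply]
    rw [Finset.sum_comm]
    refine Finset.sum_eq_zero fun k _ => ?_
    rw [← Finset.sum_mul, hcolsum k, zero_mul]
  have hgsum : (∑ i, gradF i z) = 0 := by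
    have : ∑ i, (dstar i + gradF i (xstar i)) = 0 := by
      simp [hfix1]
    rw [Finset.sum_add_distrib (f := fun i => dstar i), hdsum, zero_add] at this
    simpa [hxz] using this
  refine ⟨z, hxz, hgsum, fun w => ?_⟩
  have hle : ∑ i, f i z ≤ ∑ i, f i w := by
    have h1 : ∑ i, (f i z + (gradF i z) ⬝ᵥ (w - z)) ≤ ∑ i, f i w :=
      Finset.sum_le_sum fun i _ => hconv i z w
    have h2 : ∑ i, (f i z + (gradF i z) ⬝ᵥ (w - z))
        = ∑ i, f i z + (∑ i, gradF i z) ⬝ᵥ (w - z) := by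
      rw [Finset.sum_add_distrib]
      congr 1
      simp only [dotProduct, Finset.sum_apply, Finset.sum_mul]
      exact Finset.sum_comm
    rw [h2, hgsum] at h1
    simpa using h1
  have hnn : (0:ℝ) ≤ 1 / (n:ℝ) := by positivity
  exact mul_le_mul_of_nonneg_left hle hnn
end
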